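/- arXiv:2109.01896 — 4 statements merged into one kernel-verified Lean document; each statement's English description precedes it below -/
import Mathlib

section
/- Truthful bidding is a dominant strategy in the GamePlan auction: for an agent with valuation ζ_k allocated slot k when bidding truthfully, deviating to any adjacent slot (slot k-1 via overbidding with b_{k-1} > ζ_k > b_k, or slot k+1 via underbidding) yields utility no greater than the truthful utility ζ_k/t_k - Σ_{j=k}^{K} b_{j+1}(1/t_j - 1/t_{j+1}). -/
open Finset in
/-- Truthful bidding is dominant against adjacent deviations: deviating to the
previous slot (overbidding) or the next slot (underbidding) yields utility no
greater than the truthful utility. -/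
theorem truthful_bidding_dominant_adjacent
    (K k : ℕ) (ζk : ℝ) (b t : ℕ → ℝ) (r : ℕ → ℝ)
    (hr : ∀ j, r j = if j ≤ K then 1 / t j else 0)
    (hk1 : 1 ≤ k) (hkK : k ≤ K)
    (hbdec : ∀ j, 1 ≤ j → j < K → b (j + 1) < b j)
    (hbK : 0 < b K) (hbK1 : b (K + 1) = 0)
    (htrue : b k = ζk)
    (ht1 : 0 < t 1) (htinc : ∀ j, 1 ≤ j → j < K → t j < t (j + 1)) :
    (2 ≤ k →
      ζk / t (k - 1) - b k * (1 / t (k - 1) - 1 / t k)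
          - ∑ j ∈ Finset.Icc k K, b (j + 1) * (r j - r (j + 1))
        ≤ ζk / t k - ∑ j ∈ Finset.Icc k K, b (j + 1) * (r j - r (j + 1))) ∧
    (k < K →
      ζk / t (k + 1) - ∑ j ∈ Finset.Icc (k + 1) K, b (j + 1) * (r j - r (j + 1))
        ≤ ζk / t k - ∑ j ∈ Finset.Icc k K, b (j + 1) * (r j - r (j + 1))) := by
  have htpos : ∀ j, 1 ≤ j → j ≤ K → 0 < t j := by
    intro j hj1 hjK
    induction j with
    | zero => omega
    | succ n ih =>
      rcases Nat.eq_or_lt_of_le hj1 with h | h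
      · simpa [← h] using ht1
      · have hn1 : 1 ≤ n := by omega
        have hnK : n < K := by omega
        exact lt_trans (ih hn1 (le_of_lt hnK)) (htinc n hn1 hnK)
  constructor
  · intro _
    rw [htrue]
    apply le_of_eq
    ring
  · intro hkK'
    have hsplit : ∑ j ∈ Finset.Icc k K, b (j + 1) * (r j - r (j + 1))
        = b (k + 1) * (r k - r (k + 1))
          + ∑ j ∈ Finset.Icc (k + 1) K, b (j + 1) * (r j - r (j + 1)) := by
      rw [← Finset.Ioc_insert_left hkK, Finset.sum_insert (by simp), Finset.Icc_add_one_left_eq_Ioc]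
    rw [hsplit]
    have hrk : r k = 1 / t k := by rw [hr]; simp [hkK]
    have hrk1 : r (k + 1) = 1 / t (k + 1) := by rw [hr, if_pos (by omega : k + 1 ≤ K)]
    rw [hrk, hrk1]
    have htk : 0 < t k := htpos k hk1 hkK
    have htk1 : 0 < t (k + 1) := htpos (k + 1) (by omega) hkK'
    have hinv : 1 / t (k + 1) ≤ 1 / t k :=
      one_div_le_one_div_of_le htk (le_of_lt (htinc k hk1 hkK'))
    have hb : b (k + 1) ≤ ζk := htrue ▸ le_of_lt (hbdec k hk1 hkK')
    have key : 0 ≤ (ζk - b (k + 1)) * (1 / t k - 1 / t (k + 1)) :=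
      mul_nonneg (sub_nonneg.2 hb) (sub_nonneg.2 hinv)
    have e1 : ζk / t k = ζk * (1 / t k) := by ring
    have e2 : ζk / t (k + 1) = ζk * (1 / t (k + 1)) := by ring
    have key2 : b (k + 1) * (1 / t k - 1 / t (k + 1))
        ≤ ζk * (1 / t k) - ζk * (1 / t (k + 1)) := by nlinarith [key]
    linarith [key2]
end

section
/- In the truthful GamePlan auction (b_j = ζ_j for all j, with ζ_1 > ... > ζ_K > 0 and 0 < t_1 < ... < t_K, ζ_{K+1} := 0, 1/t_{K+1} := 0), every agent's utility is nonnegative: u_k = ζ_k/t_k - Σ_{j=k}^{K} ζ_{j+1}(1/t_j - 1/t_{j+1}) ≥ 0 for every k. -/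
open Finset in
/-- Individual rationality: under truthful bidding every agent's utility is
nonnegative. -/
theorem truthful_utility_nonneg
    (K : ℕ) (ζ t : ℕ → ℝ) (r : ℕ → ℝ)
    (hr : ∀ j, r j = if j ≤ K then 1 / t j else 0)
    (hζdec : ∀ j, 1 ≤ j → j < K → ζ (j + 1) < ζ j)
    (hζK : 0 < ζ K) (hζK1 : ζ (K + 1) = 0)
    (ht1 : 0 < t 1) (htinc : ∀ j, 1 ≤ j → j < K → t j < t (j + 1)) :
    ∀ k, 1 ≤ k → k ≤ K →
      0 ≤ ζ k / t k - ∑ j ∈ Finset.Icc k K, ζ (j + 1) * (r j - r (j + 1)) := by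
  -- positivity of t on [1, K]
  have tpos : ∀ j, 1 ≤ j → j ≤ K → 0 < t j := by
    intro j hj
    induction j with
    | zero => omega
    | succ n ih =>
      intro hnK
      rcases Nat.eq_or_lt_of_le hj with h | h
      · simpa [← h] using ht1
      · have hn1 : 1 ≤ n := by omega
        have hnK' : n < K := by omega
        exact lt_trans (ih hn1 (le_of_lt hnK')) (htinc n hn1 hnK')
  -- ζ is antitone on [1, K]
  have ζmono : ∀ i j, 1 ≤ i → i ≤ j → j ≤ K → ζ j ≤ ζ i := by
    intro i j hi hij
    induction j with
    | zero => omega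
    | succ n ih =>
      intro hnK
      rcases Nat.eq_or_lt_of_le hij with h | h
      · simp [h]
      · have hn : i ≤ n := by omega
        have := hζdec n (by omega) (by omega)
        exact le_trans (le_of_lt this) (ih hn (by omega))
  -- main bound: sum ≤ ζ k * r k, by downward induction
  have key : ∀ n k, 1 ≤ k → k ≤ K → K - k ≤ n →
      ∑ j ∈ Finset.Icc k K, ζ (j + 1) * (r j - r (j + 1)) ≤ ζ k * r k := by
    intro n
    induction n with
    | zero =>
      intro k hk hkK hd
      have hkK' : k = K := by omega
      subst hkK'
      rw [Finset.Icc_self, Finset.sum_singleton, hζK1]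
      have : 0 < r k := by
        rw [hr k, if_pos le_rfl]
        exact div_pos one_pos (tpos k hk hkK)
      nlinarith [hζK]
    | succ n ih =>
      intro k hk hkK hd
      rcases Nat.eq_or_lt_of_le hkK with h | h
      · subst h
        rw [Finset.Icc_self, Finset.sum_singleton, hζK1]
        have : 0 < r k := by
          rw [hr k, if_pos le_rfl]
          exact div_pos one_pos (tpos k hk le_rfl)
        nlinarith [hζK]
      · have hsplit : Finset.Icc k K = insert k (Finset.Icc (k + 1) K) := by
          ext x; simp [Finset.mem_Icc, Finset.mem_insert]; omega
        rw [hsplit, Finset.sum_insert (by simp)]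
        have hIH := ih (k + 1) (by omega) (by omega) (by omega)
        have hζle : ζ (k + 1) ≤ ζ k := le_of_lt (hζdec k hk h)
        have hrk : 0 ≤ r k := by
          rw [hr k, if_pos hkK]
          exact le_of_lt (div_pos one_pos (tpos k hk hkK))
        nlinarith [hIH, hζle, hrk]
  intro k hk hkK
  have := key (K - k) k hk hkK le_rfl
  have hrk : r k = 1 / t k := by rw [hr k, if_pos hkK]
  have : ∑ j ∈ Finset.Icc k K, ζ (j + 1) * (r j - r (j + 1)) ≤ ζ k / t k := by
    have heq : ζ k * (1 / t k) = ζ k / t k := by ring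
    rw [hrk, heq] at this; exact this
  linarith
end

section
/- Monotone utilities under truthful bidding: in the truthful GamePlan auction with ζ_1 > ζ_2 > ... > ζ_K > 0 and 0 < t_1 < ... < t_K (ζ_{K+1} := 0, 1/t_{K+1} := 0), define u_k = ζ_k/t_k - Σ_{j=k}^{K} ζ_{j+1}(1/t_j - 1/t_{j+1}). Then u_k ≥ u_{k+1} for all 1 ≤ k < K. -/
open Finset in
/-- Monotone utilities under truthful bidding: more aggressive agents receive
at least as much utility. -/
theorem truthful_utilities_monotone
    (K : ℕ) (ζ t : ℕ → ℝ) (r u : ℕ → ℝ)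
    (hr : ∀ j, r j = if j ≤ K then 1 / t j else 0)
    (hu : ∀ k, u k = ζ k / t k - ∑ j ∈ Finset.Icc k K, ζ (j + 1) * (r j - r (j + 1)))
    (hζdec : ∀ j, 1 ≤ j → j < K → ζ (j + 1) < ζ j)
    (hζK : 0 < ζ K) (hζK1 : ζ (K + 1) = 0)
    (ht1 : 0 < t 1) (htinc : ∀ j, 1 ≤ j → j < K → t j < t (j + 1)) :
    ∀ k, 1 ≤ k → k < K → u (k + 1) ≤ u k := by
  have htpos : ∀ k, 1 ≤ k → k ≤ K → 0 < t k := by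
    intro k hk1 hkK
    induction k with
    | zero => omega
    | succ n ih =>
      rcases Nat.eq_or_lt_of_le hk1 with h | h
      · simpa [← h] using ht1
      · have hn1 : 1 ≤ n := by omega
        have := htinc n hn1 (by omega)
        have := ih hn1 (by omega)
        linarith
  intro k hk1 hkK
  have hk : k ≤ K := le_of_lt hkK
  have hsplit : (Finset.Icc k K) = insert k (Finset.Icc (k + 1) K) := by
    ext x; simp [Finset.mem_Icc]; omega
  rw [hu k, hu (k + 1), hsplit, Finset.sum_insert (by simp)]
  have hrk : r k = 1 / t k := by rw [hr k, if_pos hk]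
  have hrk1 : r (k + 1) = 1 / t (k + 1) := by rw [hr (k + 1), if_pos (show k + 1 ≤ K from hkK)]
  rw [hrk, hrk1]
  have htk := htpos k hk1 hk
  have htk1 := htpos (k + 1) (by omega) hkK
  have hζ := hζdec k hk1 hkK
  have h1 : ζ (k + 1) / t k ≤ ζ k / t k := by gcongr
  have key : ζ (k + 1) * (1 / t k - 1 / t (k + 1)) =
      ζ (k + 1) / t k - ζ (k + 1) / t (k + 1) := by ring
  linarith
end

section
/- Partial-sum maximality is inherited: suppose ζ_1 > ζ_2 > ... > ζ_n > 0 and 1/t_1 > 1/t_2 > ... > 1/t_n > 0. If for an injective map σ from {1,...,k} into {1,...,n}, Σ_{j=1}^k ζ_{σ(j)}/t_j ≤ Σ_{j=1}^k ζ_j/t_j for all injections σ, then the same holds with k replaced by k+1 (for k+1 ≤ n): for every injection τ from {1,...,k+1} into {1,...,n}, Σ_{j=1}^{k+1} ζ_{τ(j)}/t_j ≤ Σ_{j=1}^{k+1} ζ_j/t_j. -/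
open Finset in
/-- Inductive step of welfare maximization: if the greedy assignment maximizes
every length-`k` prefix of the welfare sum over injections, the same holds for
length `k + 1`. -/
theorem prefix_maximality_inherited
    (n k : ℕ) (ζ t : ℕ → ℝ)
    (hζpos : ∀ j, 1 ≤ j → j ≤ n → 0 < ζ j)
    (hζdec : ∀ i j, 1 ≤ i → i < j → j ≤ n → ζ j < ζ i)
    (htpos : ∀ j, 1 ≤ j → j ≤ n → 0 < 1 / t j)
    (htdec : ∀ i j, 1 ≤ i → i < j → j ≤ n → 1 / t j < 1 / t i)
    (hkn : k + 1 ≤ n)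
    (hind : ∀ σ : ℕ → ℕ, Set.InjOn σ (Set.Icc 1 k) →
      (∀ j ∈ Set.Icc 1 k, σ j ∈ Set.Icc 1 n) →
      ∑ j ∈ Finset.Icc 1 k, ζ (σ j) / t j ≤ ∑ j ∈ Finset.Icc 1 k, ζ j / t j) :
    ∀ τ : ℕ → ℕ, Set.InjOn τ (Set.Icc 1 (k + 1)) →
      (∀ j ∈ Set.Icc 1 (k + 1), τ j ∈ Set.Icc 1 n) →
      ∑ j ∈ Finset.Icc 1 (k + 1), ζ (τ j) / t j
        ≤ ∑ j ∈ Finset.Icc 1 (k + 1), ζ j / t j := by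
  intro τ hinj hmap
  set S := Finset.Icc 1 (k + 1) with hSdef
  have hSne : S.Nonempty := ⟨1, by simp [hSdef]⟩
  obtain ⟨m, hmS, hmax⟩ := S.exists_max_image τ hSne
  have hkS : (k + 1) ∈ S := by simp [hSdef]
  set e := Equiv.swap m (k + 1) with he
  set τ' : ℕ → ℕ := fun j => τ (e j) with hτ'
  have heS : ∀ j ∈ S, e j ∈ S := by
    intro j hj
    rcases eq_or_ne j m with rfl | hjm
    · simpa [he] using hkS
    rcases eq_or_ne j (k + 1) with rfl | hjk
    · simpa [he, Equiv.swap_apply_right] using hmS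
    · simpa [he, Equiv.swap_apply_of_ne_of_ne hjm hjk] using hj
  have hmemS : ∀ j ∈ S, j ∈ Set.Icc 1 (k + 1) := by
    intro j hj; simpa [hSdef] using hj
  -- τ' maps S into [1,n]
  have hmap' : ∀ j ∈ S, τ' j ∈ Set.Icc 1 n := fun j hj =>
    hmap _ (hmemS _ (heS j hj))
  -- τ m ≥ k + 1 (pigeonhole)
  have himg : S.image τ ⊆ Finset.Icc 1 (τ m) := by
    intro x hx
    simp only [Finset.mem_image] at hx
    obtain ⟨j, hj, rfl⟩ := hx
    have h1 := hmap _ (hmemS _ hj)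
    exact Finset.mem_Icc.mpr ⟨h1.1, hmax j hj⟩
  have hcard : (S.image τ).card = k + 1 := by
    rw [Finset.card_image_of_injOn (by simpa [hSdef] using hinj)]
    simp [hSdef]
  have hτm : k + 1 ≤ τ m := by
    have := Finset.card_le_card himg
    simpa [hcard] using this
  have hτmn : τ m ≤ n := (hmap _ (hmemS _ hmS)).2
  have hmle : m ≤ k + 1 := (Finset.mem_Icc.mp hmS).2
  have hm1 : 1 ≤ m := (Finset.mem_Icc.mp hmS).1
  -- Step 1 : original sum ≤ swapped sum
  have step1 : ∑ j ∈ S, ζ (τ j) / t j ≤ ∑ j ∈ S, ζ (τ' j) / t j := by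
    rcases eq_or_ne m (k + 1) with rfl | hmk
    · simp [hτ', he]
    have hmlt : m < k + 1 := lt_of_le_of_ne hmle hmk
    have hmS' : m ∈ S.erase (k + 1) := Finset.mem_erase.mpr ⟨hmk, hmS⟩
    have hsplit : ∀ g : ℕ → ℝ, ∑ j ∈ S, g j
        = g (k + 1) + (g m + ∑ j ∈ (S.erase (k + 1)).erase m, g j) := by
      intro g
      rw [← Finset.add_sum_erase _ g hkS, ← Finset.add_sum_erase _ g hmS']
    rw [hsplit (fun j => ζ (τ j) / t j), hsplit (fun j => ζ (τ' j) / t j)]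
    have hsame : ∑ j ∈ (S.erase (k + 1)).erase m, ζ (τ j) / t j
        = ∑ j ∈ (S.erase (k + 1)).erase m, ζ (τ' j) / t j := by
      apply Finset.sum_congr rfl
      intro j hj
      have hj1 := Finset.mem_erase.mp hj
      have hj2 := Finset.mem_erase.mp hj1.2
      simp [hτ', he, Equiv.swap_apply_of_ne_of_ne hj1.1 hj2.1]
    rw [hsame]
    have hτ'k : τ' (k + 1) = τ m := by simp [hτ', he]
    have hτ'm : τ' m = τ (k + 1) := by simp [hτ', he]
    rw [hτ'k, hτ'm]
    -- rearrangement for two terms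
    have hab : ζ (τ m) ≤ ζ (τ (k + 1)) := by
      have hle : τ (k + 1) ≤ τ m := hmax _ hkS
      rcases eq_or_lt_of_le hle with h | h
      · rw [h]
      · exact le_of_lt (hζdec _ _ (hmap _ (hmemS _ hkS)).1 h hτmn)
    have hcd : 1 / t (k + 1) ≤ 1 / t m := le_of_lt (htdec m (k + 1) hm1 hmlt hkn)
    have key : ζ (τ m) * (1 / t m) + ζ (τ (k + 1)) * (1 / t (k + 1))
        ≤ ζ (τ m) * (1 / t (k + 1)) + ζ (τ (k + 1)) * (1 / t m) :=
      mul_add_mul_le_mul_add_mul hab hcd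
    have h1 : ∀ (a b : ℝ), a / b = a * (1 / b) := fun a b => by
      rw [div_eq_mul_one_div]
    rw [h1 (ζ (τ (k+1))) (t (k+1)), h1 (ζ (τ m)) (t m),
        h1 (ζ (τ m)) (t (k+1)), h1 (ζ (τ (k+1))) (t m)]
    linarith [key]
  -- Step 2 : swapped sum ≤ greedy sum
  have hIccsub : ∀ j ∈ Finset.Icc 1 k, j ∈ S := by
    intro j hj
    have := Finset.mem_Icc.mp hj
    exact Finset.mem_Icc.mpr ⟨this.1, this.2.trans (Nat.le_succ k)⟩
  have hinj' : Set.InjOn τ' (Set.Icc 1 k) := by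
    intro x hx y hy hxy
    have hx' : x ∈ S := hIccsub x (by simpa using hx)
    have hy' : y ∈ S := hIccsub y (by simpa using hy)
    have := hinj (hmemS _ (heS x hx')) (hmemS _ (heS y hy')) hxy
    exact e.injective this
  have hmapk : ∀ j ∈ Set.Icc 1 k, τ' j ∈ Set.Icc 1 n := by
    intro j hj
    exact hmap' j (hIccsub j (by simpa using hj))
  have hindapp := hind τ' hinj' hmapk
  have hζk1 : ζ (τ' (k + 1)) ≤ ζ (k + 1) := by
    have hτ'k : τ' (k + 1) = τ m := by simp [hτ', he]
    rw [hτ'k]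
    rcases eq_or_lt_of_le hτm with h | h
    · rw [← h]
    · exact le_of_lt (hζdec (k + 1) (τ m) (Nat.le_add_left 1 k) h hτmn)
  have htk1 : 0 < 1 / t (k + 1) := htpos (k + 1) (Nat.le_add_left 1 k) hkn
  have htop : ∑ j ∈ S, ζ (τ' j) / t j
      = (∑ j ∈ Finset.Icc 1 k, ζ (τ' j) / t j) + ζ (τ' (k + 1)) / t (k + 1) :=
    Finset.sum_Icc_succ_top (Nat.le_add_left 1 k) _
  have htop2 : ∑ j ∈ S, ζ j / t j
      = (∑ j ∈ Finset.Icc 1 k, ζ j / t j) + ζ (k + 1) / t (k + 1) :=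
    Finset.sum_Icc_succ_top (Nat.le_add_left 1 k) _
  have hlast : ζ (τ' (k + 1)) / t (k + 1) ≤ ζ (k + 1) / t (k + 1) := by
    rw [div_eq_mul_one_div (ζ (τ' (k + 1))) (t (k + 1)), div_eq_mul_one_div (ζ (k + 1)) (t (k + 1))]
    exact mul_le_mul_of_nonneg_right hζk1 (le_of_lt htk1)
  calc ∑ j ∈ S, ζ (τ j) / t j
      ≤ ∑ j ∈ S, ζ (τ' j) / t j := step1
    _ = (∑ j ∈ Finset.Icc 1 k, ζ (τ' j) / t j) + ζ (τ' (k + 1)) / t (k + 1) := htop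
    _ ≤ (∑ j ∈ Finset.Icc 1 k, ζ j / t j) + ζ (k + 1) / t (k + 1) :=
        add_le_add hindapp hlast
    _ = ∑ j ∈ S, ζ j / t j := htop2.symm
end
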